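/- arXiv:1404.1728 — 3 statements merged into one kernel-verified Lean document; each statement's English description precedes it below -/
import Mathlib

section
/- Let M1 and M2 be matroids on ground sets E1, E2 with E1 ∩ E2 = {e}, where e is neither a loop nor a coloop of M1 or M2. Then M1 = P(M1,M2) − (E2 − e); in particular M1 and M2 are restrictions (submatroids) of the parallel connection P(M1,M2). -/
open Polynomial

namespace SPPaper

noncomputable section
open Classical

universe u
variable {α : Type u} {V : Type u}

/-- Deletion of a set of elements: `M − X`. -/
def del (M : Matroid α) (X : Set α) : Matroid α := M.restrict (M.E \ X)

/-- Contraction of a set of elements: `M/X = (M✶ − X)✶`. -/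
def con (M : Matroid α) (X : Set α) : Matroid α := (del M.dual X).dual

/-- The rank of a set: the (common) cardinality of maximal independent subsets. -/
def rk (M : Matroid α) (X : Set α) : ℕ :=
  sSup {n | ∃ I, I ⊆ X ∧ M.Indep I ∧ I.ncard = n}

/-- The rank of a matroid. -/
def rank (M : Matroid α) : ℕ := rk M M.E

/-- `e` is a loop of `M` if `{e}` is dependent. -/
def IsLoop (M : Matroid α) (e : α) : Prop := e ∈ M.E ∧ ¬ M.Indep {e}

/-- A matroid is loopless if it has no loops. -/
def Loopless (M : Matroid α) : Prop := ∀ e, ¬ IsLoop M e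

/-- `e` is a coloop of `M` if it lies in every basis. -/
def IsColoop (M : Matroid α) (e : α) : Prop := e ∈ M.E ∧ ∀ B, M.IsBase B → e ∈ B

/-- A circuit of a matroid: a minimal dependent set. -/
def IsCircuit (M : Matroid α) (C : Set α) : Prop := M.Dep C ∧ ∀ D, D ⊂ C → M.Indep D

/-- A matroid is simple if it has no loops and no two-element circuits. -/
def Simple (M : Matroid α) : Prop := Loopless M ∧ ∀ e f : α, ¬ IsCircuit M {e, f}

/-- `h(M;x) = t(M;x,0)` where `t` is the Tutte polynomial:
`t(M;x,y) = ∑_{A ⊆ E} (x−1)^(r(E)−r(A)) (y−1)^(|A|−r(A))`. -/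
def hPoly (M : Matroid α) [Fintype α] : Polynomial ℤ :=
  ∑ A ∈ (Set.toFinite M.E).toFinset.powerset,
    (Polynomial.X - 1) ^ (rank M - rk M (A : Set α)) *
      (-1 : Polynomial ℤ) ^ (A.card - rk M (A : Set α))

/-- The `i`-th entry of the h-vector of the broken circuit complex:
`h(M;x) = ∑_{i=0}^r h_i x^(r−i)`. -/
def hvec (M : Matroid α) [Fintype α] (i : ℕ) : ℤ :=
  if i ≤ rank M then (hPoly M).coeff (rank M - i) else 0

/-- The beta invariant `β(M) = (−1)^(r(E)) ∑_{A ⊆ E} (−1)^(|A|) r(A)`. -/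
def beta (M : Matroid α) [Fintype α] : ℤ :=
  (-1) ^ rank M *
    ∑ A ∈ (Set.toFinite M.E).toFinset.powerset, (-1 : ℤ) ^ A.card * (rk M (A : Set α) : ℤ)

/-- `P` is the direct sum of `M1` and `M2`. -/
def IsDirSumOf (P M1 M2 : Matroid α) : Prop :=
  ∃ h : Disjoint M1.E M2.E, P = Matroid.disjointSum M1 M2 h

/-- A matroid is connected if its ground set is nonempty and it is not the direct sum
of two matroids on nonempty ground sets. -/
def Connected (M : Matroid α) : Prop :=
  M.E.Nonempty ∧ ¬ ∃ M1 M2 : Matroid α, M1.E.Nonempty ∧ M2.E.Nonempty ∧ IsDirSumOf M M1 M2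

/-- `M` is the matroid on ground set `E` whose circuits are exactly the sets satisfying `𝒞`. -/
def HasCircuits (M : Matroid α) (E : Set α) (𝒞 : Set α → Prop) : Prop :=
  M.E = E ∧ ∀ C, IsCircuit M C ↔ 𝒞 C

/-- The circuits of the parallel connection of `M1` and `M2` with basepoint `e`. -/
def PConnCircuit (M1 M2 : Matroid α) (e : α) (C : Set α) : Prop :=
  IsCircuit M1 C ∨ IsCircuit M2 C ∨
    ∃ C1 C2, IsCircuit M1 C1 ∧ IsCircuit M2 C2 ∧ e ∈ C1 ∧ e ∈ C2 ∧ C = (C1 ∪ C2) \ {e}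

/-- The circuits of the series connection of `M1` and `M2` with basepoint `e`. -/
def SConnCircuit (M1 M2 : Matroid α) (e : α) (C : Set α) : Prop :=
  IsCircuit (del M1 {e}) C ∨ IsCircuit (del M2 {e}) C ∨
    ∃ C1 C2, IsCircuit M1 C1 ∧ IsCircuit M2 C2 ∧ e ∈ C1 ∧ e ∈ C2 ∧ C = C1 ∪ C2

/-- `P` is the parallel connection of `M1` and `M2` with respect to the basepoint `e`
(including the degenerate conventions when `e` is a loop or a coloop). -/
def IsParallelConn (P M1 M2 : Matroid α) (e : α) : Prop :=
  if IsLoop M1 e then IsDirSumOf P M1 (con M2 {e})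
  else if IsColoop M1 e then IsDirSumOf P (del M1 {e}) M2
  else if IsLoop M2 e then IsDirSumOf P (con M1 {e}) M2
  else if IsColoop M2 e then IsDirSumOf P M1 (del M2 {e})
  else HasCircuits P (M1.E ∪ M2.E) (PConnCircuit M1 M2 e)

/-- `S` is the series connection of `M1` and `M2` with respect to the basepoint `e`
(including the degenerate conventions when `e` is a loop or a coloop). -/
def IsSeriesConn (S M1 M2 : Matroid α) (e : α) : Prop :=
  if IsLoop M1 e then IsDirSumOf S (con M1 {e}) M2
  else if IsColoop M1 e then IsDirSumOf S M1 (del M2 {e})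
  else if IsLoop M2 e then IsDirSumOf S M1 (con M2 {e})
  else if IsColoop M2 e then IsDirSumOf S (del M1 {e}) M2
  else HasCircuits S (M1.E ∪ M2.E) (SConnCircuit M1 M2 e)

/-- `N` is a two-element circuit. -/
def TwoCircuit (N : Matroid α) : Prop :=
  ∃ e f : α, e ≠ f ∧ N.E = {e, f} ∧ IsCircuit N N.E

/-- `M` is a series extension of `N`: `M = S(N, C₂)` for a 2-circuit `C₂`. -/
def IsSeriesExtOf (M N : Matroid α) : Prop :=
  ∃ (C : Matroid α) (e : α), TwoCircuit C ∧ N.E ∩ C.E = {e} ∧ IsSeriesConn M N C e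

/-- `M` is a parallel extension of `N`: `M = P(N, C₂)` for a 2-circuit `C₂`. -/
def IsParallelExtOf (M N : Matroid α) : Prop :=
  ∃ (C : Matroid α) (e : α), TwoCircuit C ∧ N.E ∩ C.E = {e} ∧ IsParallelConn M N C e

/-- A series-parallel network: a matroid obtainable from a coloop by a sequence of
series and parallel extensions. -/
inductive IsSPNetwork : Matroid α → Prop
  | coloop (M : Matroid α) (e : α) : M.E = {e} → IsColoop M e → IsSPNetwork M
  | series (M N : Matroid α) : IsSPNetwork N → IsSeriesExtOf M N → IsSPNetwork M
  | parallel (M N : Matroid α) : IsSPNetwork N → IsParallelExtOf M N → IsSPNetwork M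

/-- `M` is parallel irreducible at `f`: either `M` is trivial or `M` is not the parallel
connection, with basepoint `f`, of two matroids each having at least two elements. -/
def ParallelIrreducibleAt (M : Matroid α) (f : α) : Prop :=
  M.E.Subsingleton ∨
    ¬ ∃ M1 M2 : Matroid α, M1.E ∩ M2.E = {f} ∧ M1.E.Nontrivial ∧ M2.E.Nontrivial ∧
        IsParallelConn M M1 M2 f

/-- `M` is parallel irreducible. -/
def ParallelIrreducible (M : Matroid α) : Prop := ∀ f ∈ M.E, ParallelIrreducibleAt M f

/-- `M` is the iterated parallel connection of the list `l` of matroids. -/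
inductive IsIterPConn : Matroid α → List (Matroid α) → Prop
  | base (M : Matroid α) : IsIterPConn M [M]
  | step (P M N : Matroid α) (l : List (Matroid α)) (e : α) :
      IsIterPConn P l → P.E ∩ N.E = {e} → IsParallelConn M P N e →
      IsIterPConn M (l ++ [N])

/-- `M` is the cycle matroid of the graph `G` (on the ground set `G.edgeSet`):
a set of edges is independent iff it contains no cycle. -/
def IsCycleMatroid (M : Matroid (Sym2 V)) (G : SimpleGraph V) : Prop :=
  M.E = G.edgeSet ∧ ∀ X ⊆ M.E, (M.Indep X ↔ (SimpleGraph.fromEdgeSet X).IsAcyclic)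

/-- `M` is (isomorphic to) the cycle matroid of the graph `G`. -/
def IsCycleMatroidOf (M : Matroid α) {W : Type} (G : SimpleGraph W) : Prop :=
  ∃ φ : α → Sym2 W, Set.InjOn φ M.E ∧ φ '' M.E = G.edgeSet ∧
    ∀ X ⊆ M.E, (M.Indep X ↔ (SimpleGraph.fromEdgeSet (φ '' X)).IsAcyclic)

/-- A matroid is graphic if it is isomorphic to the cycle matroid of a graph. -/
def IsGraphic (M : Matroid α) : Prop := ∃ (W : Type) (G : SimpleGraph W), IsCycleMatroidOf M G

/-- A nonempty set of elements, each lying in some circuit, such that every circuit of `M`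
containing one of them contains all of them. -/
def SeriesSet (M : Matroid α) (X : Set α) : Prop :=
  X ⊆ M.E ∧ X.Nonempty ∧ (∀ e ∈ X, ∃ C, IsCircuit M C ∧ e ∈ C) ∧
    ∀ C, IsCircuit M C → X ⊆ C ∨ Disjoint X C

/-- A series class: a maximal `SeriesSet`. -/
def SeriesClass (M : Matroid α) (X : Set α) : Prop :=
  SeriesSet M X ∧ ∀ Y, SeriesSet M Y → X ⊆ Y → X = Y

/-- A removable line of a block `G` (with cycle matroid `M`): a line (a nontrivial path
all of whose internal vertices have degree 2) whose removal (edges together with the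
internal vertices) leaves a block. -/
def IsRemovableLine (G : SimpleGraph V) (M : Matroid (Sym2 V)) (X : Set (Sym2 V)) : Prop :=
  ∃ (u v : V) (p : G.Walk u v), p.IsPath ∧ 0 < p.length ∧ X = {e | e ∈ p.edges} ∧
    (∀ w ∈ p.support, w ≠ u → w ≠ v → (G.neighborSet w).ncard = 2) ∧
    ((G.deleteEdges X).induce {w : V | ¬ (w ∈ p.support ∧ w ≠ u ∧ w ≠ v)}).Connected ∧
    Connected (del M X)

/-- One subdivision step: replace an edge `uv` by a path `u-w-v` through a new vertex `w`. -/
def SubdivStep (G G' : SimpleGraph V) : Prop :=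
  ∃ u v w : V, G.Adj u v ∧ w ∉ G.support ∧ w ≠ u ∧ w ≠ v ∧
    G' = SimpleGraph.fromEdgeSet ((G.edgeSet \ {s(u, v)}) ∪ {s(u, w), s(w, v)})

/-- `H` is a subdivision of the complete graph `K₄`. -/
def IsSubdivOfK4 (H : SimpleGraph V) : Prop :=
  ∃ f : Fin 4 ↪ V,
    Relation.ReflTransGen SubdivStep
      (SimpleGraph.fromEdgeSet {s | ∃ i j : Fin 4, i ≠ j ∧ s = s(f i, f j)}) H

lemma isCircuit_iff_isCircuit {M : Matroid α} {C : Set α} : IsCircuit M C ↔ M.IsCircuit C := by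
  rw [Matroid.isCircuit_iff_forall_ssubset]
  rfl

lemma isLoop_iff_isLoop {M : Matroid α} {e : α} : IsLoop M e ↔ M.IsLoop e := by
  rw [← Matroid.singleton_dep, Matroid.Dep, Set.singleton_subset_iff, and_comm]
  rfl

lemma PConnCircuit.symm {M1 M2 : Matroid α} {e : α} {C : Set α}
    (h : PConnCircuit M1 M2 e C) : PConnCircuit M2 M1 e C := by
  rcases h with h1 | h2 | ⟨C1, C2, h1, h2, he1, he2, rfl⟩
  · exact Or.inr (Or.inl h1)
  · exact Or.inl h2
  · exact Or.inr (Or.inr ⟨C2, C1, h2, h1, he2, he1, by rw [Set.union_comm]⟩)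

lemma HasCircuits.pConnCircuit_symm {P M1 M2 : Matroid α} {e : α}
    (hP : HasCircuits P (M1.E ∪ M2.E) (PConnCircuit M1 M2 e)) :
    HasCircuits P (M2.E ∪ M1.E) (PConnCircuit M2 M1 e) :=
  ⟨hP.1.trans (Set.union_comm _ _), fun C ↦ (hP.2 C).trans ⟨PConnCircuit.symm, PConnCircuit.symm⟩⟩

lemma union_diff_diff_singleton_of_inter_eq_singleton {E1 E2 : Set α} {e : α}
    (hE : E1 ∩ E2 = {e}) : (E1 ∪ E2) \ (E2 \ {e}) = E1 := by
  ext x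
  have hx := Set.ext_iff.1 hE x
  simp only [Set.mem_inter_iff, Set.mem_singleton_iff] at hx
  simp only [Set.mem_sdiff, Set.mem_union, Set.mem_singleton_iff]
  tauto

lemma not_subset_of_isCircuit_of_inter_eq_singleton {M1 M2 : Matroid α} {e : α} {C : Set α}
    (hE : M1.E ∩ M2.E = {e}) (hl2 : ¬ M2.IsLoop e) (hC : M2.IsCircuit C) : ¬ C ⊆ M1.E := by
  intro hC1
  have hCe : C ⊆ {e} := hE ▸ Set.subset_inter hC1 hC.subset_ground
  rcases Set.subset_singleton_iff_eq.1 hCe with rfl | rfl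
  · exact hC.nonempty.ne_empty rfl
  · exact hl2 (Matroid.singleton_isCircuit.1 hC)

/-- A circuit of `P(M1,M2)` inside `E1` of one of the other two kinds would put a circuit of `M2`
inside `E1 ∩ E2 = {e}`, making `e` a loop of `M2`. -/
lemma eq_del_of_hasCircuits_pConnCircuit {P M1 M2 : Matroid α} {e : α}
    (hE : M1.E ∩ M2.E = {e}) (hl2 : ¬ IsLoop M2 e)
    (hP : HasCircuits P (M1.E ∪ M2.E) (PConnCircuit M1 M2 e)) :
    M1 = del P (M2.E \ {e}) := by
  obtain ⟨hPE, hPC⟩ := hP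
  rw [isLoop_iff_isLoop] at hl2
  have hground : P.E \ (M2.E \ {e}) = M1.E := by
    rw [hPE, union_diff_diff_singleton_of_inter_eq_singleton hE]
  have hM2 : ∀ {C}, M2.IsCircuit C → ¬ C ⊆ M1.E :=
    not_subset_of_isCircuit_of_inter_eq_singleton hE hl2
  rw [del, hground]
  refine Matroid.ext_isCircuit rfl fun C hC ↦ ?_
  rw [Matroid.restrict_isCircuit_iff (hPE ▸ Set.subset_union_left), and_iff_left hC,
    ← isCircuit_iff_isCircuit, ← isCircuit_iff_isCircuit, hPC]
  refine ⟨Or.inl, ?_⟩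
  rintro (h1 | h2 | ⟨C1, C2, -, h2, -, -, rfl⟩)
  · exact h1
  · exact absurd hC (hM2 (isCircuit_iff_isCircuit.1 h2))
  · refine absurd (fun x hx ↦ ?_) (hM2 (isCircuit_iff_isCircuit.1 h2))
    by_cases hxe : x = e
    · exact hxe ▸ (hE.symm.subset rfl).1
    · exact hC ⟨Or.inr hx, hxe⟩

/-- `M1 = P(M1,M2) − (E2 − e)`; in particular `M1` and `M2` are
restrictions of `P(M1,M2)`. -/
theorem stmt6 (M1 M2 P : Matroid α) (e : α)
    (hE : M1.E ∩ M2.E = {e})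
    (hl1 : ¬ IsLoop M1 e) (hc1 : ¬ IsColoop M1 e)
    (hl2 : ¬ IsLoop M2 e) (hc2 : ¬ IsColoop M2 e)
    (hP : IsParallelConn P M1 M2 e) :
    M1 = del P (M2.E \ {e}) ∧
    Matroid.IsRestriction M1 P ∧ Matroid.IsRestriction M2 P := by
  simp only [IsParallelConn, if_neg hl1, if_neg hc1, if_neg hl2, if_neg hc2] at hP
  have h1 := eq_del_of_hasCircuits_pConnCircuit hE hl2 hP
  have h2 := eq_del_of_hasCircuits_pConnCircuit (Set.inter_comm _ _ ▸ hE) hl1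
    hP.pConnCircuit_symm
  exact ⟨h1, h1 ▸ P.restrict_isRestriction _ Set.sdiff_subset,
    h2 ▸ P.restrict_isRestriction _ Set.sdiff_subset⟩

end

end SPPaper
end

section
/- Let M be a simple non-trivial connected matroid. If M = P(N1,…,Ns) and M = P(N1',…,Nt') are two iterated parallel decompositions of M into non-trivial parallel irreducible matroids, then s = t and, after reindexing, Ni = Ni' as matroids (the decomposition is unique up to permutation of the components). -/
/-!
In a simple connected matroid a parallel connection `M = P(P, N)` at `e` of two non-trivial
matroids is never degenerate, and it is determined by its ground sets: `P` and `N` are the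
restrictions of `M`, and the circuits of `M` are those of `P`, those of `N`, and the sets
`(C₁ ∪ C₂) \ {e}` with `e ∈ C₁ ∩ C₂`.

Compare the last components `N₁`, `N₂` of two decompositions `M = P(P₁, N₁) = P(P₂, N₂)`.
Restricting the first connection to `N₂` shows that if `N₂` met both `P₁ \ {e₁}` and
`N₁ \ {e₁}` it would be a proper parallel connection or a direct sum, contradicting
irreducibility or connectivity; restricting the second one to `N₁` shows likewise that `N₂`
is not a proper subset of `N₁`. So either `N₁ = N₂`, and then `P₁ = P₂`, or `N₂ ⊆ P₁` and
`N₁ ⊆ P₂`. In the latter case `Q = M|(P₁ ∩ P₂)` satisfies `P₁ = P(Q, N₂)` and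
`P₂ = P(Q, N₁)` (unless `P₁ ∩ P₂` is a point, when `P₁ = N₂` and `P₂ = N₁`), and induction on
the decompositions of `P₂` and of `P₁` finishes the proof.
-/

open Polynomial

namespace SPPaper

noncomputable section
open Classical

universe u
variable {α : Type u} {V : Type u}

open Set

section Basic

variable {M N : Matroid α} {C U V : Set α} {e : α} {l : List (Matroid α)}

lemma isCircuit_iff : IsCircuit M C ↔ M.IsCircuit C := by
  rw [Matroid.isCircuit_iff_forall_ssubset]
  rfl

lemma isLoop_iff : IsLoop M e ↔ M.IsCircuit {e} := by
  rw [Matroid.singleton_isCircuit, IsLoop, Matroid.indep_singleton]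
  exact ⟨fun ⟨he, h⟩ => (Matroid.not_isNonloop_iff he).1 h,
    fun h => ⟨h.mem_ground, h.not_isNonloop⟩⟩

lemma not_isColoop_of_mem (hC : M.IsCircuit C) (he : e ∈ C) : ¬ IsColoop M e :=
  fun h => hC.not_isColoop_of_mem he (Matroid.isColoop_iff_forall_mem_isBase.2 fun B hB => h.2 B hB)

lemma simple_iff : Simple M ↔ ∀ ⦃C⦄, M.IsCircuit C → ∀ a b, ¬ C ⊆ {a, b} := by
  refine ⟨fun ⟨hl, h2⟩ C hC a b hab => ?_, fun h => ⟨fun e he => ?_, fun a b hab => ?_⟩⟩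
  · obtain rfl | rfl | rfl | rfl := subset_pair_iff_eq.1 hab
    · exact hC.nonempty.ne_empty rfl
    · exact hl a (isLoop_iff.2 hC)
    · exact hl b (isLoop_iff.2 hC)
    · exact h2 a b (isCircuit_iff.2 hC)
  · exact h (isLoop_iff.1 he) e e (by simp)
  · exact h (isCircuit_iff.1 hab) a b Subset.rfl

lemma Simple.not_subset_pair (hs : Simple M) (hC : M.IsCircuit C) (a b : α) : ¬ C ⊆ {a, b} :=
  simple_iff.1 hs hC a b

lemma Simple.of_forall_isCircuit (hs : Simple M) (h : ∀ C, N.IsCircuit C → M.IsCircuit C) :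
    Simple N :=
  simple_iff.2 fun C hC => hs.not_subset_pair (h C hC)

lemma IsDirSumOf.subset_or_subset {M₁ M₂ : Matroid α} (h : IsDirSumOf M M₁ M₂)
    (hC : M.IsCircuit C) : C ⊆ M₁.E ∨ C ⊆ M₂.E := by
  obtain ⟨hdj, rfl⟩ := h
  by_contra! hC₁₂
  refine hC.not_indep (Matroid.disjointSum_indep_iff.2 ⟨?_, ?_, by simpa using hC.subset_ground⟩)
  · simpa [inter_assoc] using
      (Matroid.disjointSum_indep_iff.1 (hC.ssubset_indep (inter_ssubset_left_iff.2 hC₁₂.1))).1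
  · simpa [inter_assoc] using
      (Matroid.disjointSum_indep_iff.1 (hC.ssubset_indep (inter_ssubset_left_iff.2 hC₁₂.2))).2.1

lemma isDirSumOf_restrict (hdj : Disjoint U V) (hUV : U ∪ V = M.E)
    (hsplit : ∀ C, M.IsCircuit C → C ⊆ U ∨ C ⊆ V) :
    IsDirSumOf M (M.restrict U) (M.restrict V) := by
  refine ⟨by simpa using hdj, Matroid.ext_indep (by simp [hUV]) fun I hI => ?_⟩
  simp only [Matroid.disjointSum_indep_iff, Matroid.restrict_indep_iff,
    Matroid.restrict_ground_eq, hUV]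
  refine ⟨fun h => ⟨⟨h.subset inter_subset_left, inter_subset_right⟩,
    ⟨h.subset inter_subset_left, inter_subset_right⟩, hI⟩, fun ⟨⟨hIU, _⟩, ⟨hIV, _⟩, _⟩ => ?_⟩
  rw [Matroid.indep_iff_forall_subset_not_isCircuit hI]
  intro C hCI hC
  rcases hsplit C hC with h | h
  · exact hC.not_indep (hIU.subset (subset_inter hCI h))
  · exact hC.not_indep (hIV.subset (subset_inter hCI h))

lemma not_connected_of_forall_isCircuit (hU : U.Nonempty) (hV : V.Nonempty) (hdj : Disjoint U V)
    (hUV : U ∪ V = M.E) (hsplit : ∀ C, M.IsCircuit C → C ⊆ U ∨ C ⊆ V) : ¬ Connected M :=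
  fun h => h.2 ⟨_, _, hU, hV, isDirSumOf_restrict hdj hUV hsplit⟩

lemma IsParallelConn.left_subset_or_right_subset {P : Matroid α} (h : IsParallelConn M P N e) :
    P.E ⊆ M.E ∨ N.E ⊆ M.E := by
  have hsum {A B : Matroid α} (h : IsDirSumOf M A B) : A.E ⊆ M.E ∧ B.E ⊆ M.E := by
    obtain ⟨hdj, rfl⟩ := h
    simp
  unfold IsParallelConn at h
  split_ifs at h
  · exact .inl (hsum h).1
  · exact .inr (hsum h).2
  · exact .inr (hsum h).2
  · exact .inl (hsum h).1
  · exact .inl (h.1 ▸ subset_union_left)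

lemma IsIterPConn.nontrivial_ground (h : IsIterPConn M l) (hl : ∀ W ∈ l, W.E.Nontrivial) :
    M.E.Nontrivial := by
  induction h with
  | base M => exact hl M (List.mem_singleton_self M)
  | step P M N l e _ _ hpc ih =>
    rcases hpc.left_subset_or_right_subset with h | h
    · exact (ih fun W hW => hl W (List.mem_append_left _ hW)).mono h
    · exact (hl N List.mem_concat_self).mono h

end Basic

/-- The non-degenerate case of `IsParallelConn` (see `isProperParallelConn_iff`), stated with
Mathlib's `Matroid.IsCircuit`. -/
structure IsProperParallelConn (M P N : Matroid α) (e : α) : Prop where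
  ground_eq : M.E = P.E ∪ N.E
  inter_eq : P.E ∩ N.E = {e}
  isCircuit_iff : ∀ C, M.IsCircuit C ↔ P.IsCircuit C ∨ N.IsCircuit C ∨
    ∃ C₁ C₂, P.IsCircuit C₁ ∧ N.IsCircuit C₂ ∧ e ∈ C₁ ∧ e ∈ C₂ ∧ C = (C₁ ∪ C₂) \ {e}

lemma isProperParallelConn_iff {M P N : Matroid α} {e : α} : IsProperParallelConn M P N e ↔
    HasCircuits M (P.E ∪ N.E) (PConnCircuit P N e) ∧ P.E ∩ N.E = {e} := by
  simp only [HasCircuits, PConnCircuit, isCircuit_iff]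
  exact ⟨fun h => ⟨⟨h.1, h.3⟩, h.2⟩, fun h => ⟨h.1.1, h.2, h.1.2⟩⟩

namespace IsProperParallelConn

variable {M P N : Matroid α} {C S U V Z : Set α} {e x : α}

lemma symm (hsp : IsProperParallelConn M P N e) : IsProperParallelConn M N P e where
  ground_eq := hsp.ground_eq.trans (union_comm _ _)
  inter_eq := (inter_comm _ _).trans hsp.inter_eq
  isCircuit_iff C := by
    rw [hsp.isCircuit_iff, or_left_comm]
    refine or_congr_right (or_congr_right ⟨?_, ?_⟩) <;>
    · rintro ⟨C₁, C₂, h₁, h₂, he₁, he₂, rfl⟩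
      exact ⟨C₂, C₁, h₂, h₁, he₂, he₁, by rw [union_comm]⟩

lemma left_mem (hsp : IsProperParallelConn M P N e) : e ∈ P.E :=
  (hsp.inter_eq.ge rfl).1

lemma right_mem (hsp : IsProperParallelConn M P N e) : e ∈ N.E :=
  (hsp.inter_eq.ge rfl).2

lemma left_subset (hsp : IsProperParallelConn M P N e) : P.E ⊆ M.E :=
  hsp.ground_eq ▸ subset_union_left

lemma right_subset (hsp : IsProperParallelConn M P N e) : N.E ⊆ M.E :=
  hsp.symm.left_subset

lemma left_ground_eq (hsp : IsProperParallelConn M P N e) : P.E = insert e (M.E \ N.E) := by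
  rw [hsp.ground_eq, union_sdiff_right, insert_eq, union_comm, ← hsp.inter_eq, sdiff_union_inter]

lemma isCircuit_of_left (hsp : IsProperParallelConn M P N e) (hC : P.IsCircuit C) :
    M.IsCircuit C :=
  (hsp.isCircuit_iff C).2 (.inl hC)

lemma isCircuit_of_right (hsp : IsProperParallelConn M P N e) (hC : N.IsCircuit C) :
    M.IsCircuit C :=
  hsp.symm.isCircuit_of_left hC

lemma subset_pair (hsp : IsProperParallelConn M P N e) (hSP : S ⊆ P.E)
    (hSN : S ⊆ insert x N.E) : S ⊆ {e, x} := by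
  intro y hy
  rcases hSN hy with rfl | hyN
  · exact .inr rfl
  · have hy' : y ∈ P.E ∩ N.E := ⟨hSP hy, hyN⟩
    rw [hsp.inter_eq] at hy'
    exact .inl hy'

/-- Otherwise a circuit of `P` (either `C` or the `P`-part of `C`) would lie in `{e, x}`,
which simplicity forbids. -/
lemma isCircuit_right_of_subset_insert (hsp : IsProperParallelConn M P N e) (hs : Simple M)
    (hC : M.IsCircuit C) (hCN : C ⊆ insert x N.E) : N.IsCircuit C := by
  obtain hP | hN | ⟨C₁, C₂, h₁, -, he₁, -, rfl⟩ := (hsp.isCircuit_iff C).1 hC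
  · exact absurd (hsp.subset_pair hP.subset_ground hCN) (hs.not_subset_pair hC e x)
  · exact hN
  · refine absurd (hsp.subset_pair h₁.subset_ground fun y hy => ?_)
      (hs.not_subset_pair (hsp.isCircuit_of_left h₁) e x)
    by_cases hye : y = e
    · exact hye ▸ mem_insert_of_mem _ hsp.right_mem
    · exact hCN ⟨.inl hy, hye⟩

lemma isCircuit_left_of_subset_insert (hsp : IsProperParallelConn M P N e) (hs : Simple M)
    (hC : M.IsCircuit C) (hCP : C ⊆ insert x P.E) : P.IsCircuit C :=
  hsp.symm.isCircuit_right_of_subset_insert hs hC hCP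

lemma isCircuit_left_iff (hsp : IsProperParallelConn M P N e) (hs : Simple M) :
    P.IsCircuit C ↔ M.IsCircuit C ∧ C ⊆ P.E :=
  ⟨fun h => ⟨hsp.isCircuit_of_left h, h.subset_ground⟩,
    fun h => hsp.isCircuit_left_of_subset_insert (x := e) hs h.1 (h.2.trans (subset_insert _ _))⟩

lemma left_eq_restrict (hsp : IsProperParallelConn M P N e) (hs : Simple M) :
    P = M.restrict P.E :=
  Matroid.ext_isCircuit rfl fun C _ => by
    rw [hsp.isCircuit_left_iff hs, Matroid.restrict_isCircuit_iff hsp.left_subset]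

lemma right_eq_restrict (hsp : IsProperParallelConn M P N e) (hs : Simple M) :
    N = M.restrict N.E :=
  hsp.symm.left_eq_restrict hs

lemma simple_left (hsp : IsProperParallelConn M P N e) (hs : Simple M) : Simple P :=
  hs.of_forall_isCircuit fun _ => hsp.isCircuit_of_left

lemma simple_right (hsp : IsProperParallelConn M P N e) (hs : Simple M) : Simple N :=
  hsp.symm.simple_left hs

lemma not_connected_of_left_split (hsp : IsProperParallelConn M P N e) (hdj : Disjoint U V)
    (hUV : U ∪ V = P.E) (heU : e ∈ U) (hV : V.Nonempty)
    (hsplit : ∀ C, P.IsCircuit C → C ⊆ U ∨ C ⊆ V) : ¬ Connected M := by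
  have heV : e ∉ V := disjoint_left.1 hdj heU
  refine not_connected_of_forall_isCircuit (U := U ∪ N.E) ⟨e, .inl heU⟩ hV ?_ ?_ fun C hC => ?_
  · refine disjoint_union_left.2 ⟨hdj, disjoint_left.2 fun y hyN hyV => heV ?_⟩
    have hy : y ∈ P.E ∩ N.E := ⟨hUV ▸ .inr hyV, hyN⟩
    rw [hsp.inter_eq, mem_singleton_iff] at hy
    exact hy ▸ hyV
  · rw [hsp.ground_eq, ← hUV, union_right_comm]
  · obtain hP | hN | ⟨C₁, C₂, h₁, h₂, he₁, -, rfl⟩ := (hsp.isCircuit_iff C).1 hC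
    · exact (hsplit C hP).imp (fun h => h.trans subset_union_left) id
    · exact .inl (hN.subset_ground.trans subset_union_right)
    · have hC₁U : C₁ ⊆ U := (hsplit C₁ h₁).resolve_right fun h => heV (h he₁)
      exact .inl (sdiff_subset.trans (union_subset_union hC₁U h₂.subset_ground))

lemma connected_left (hsp : IsProperParallelConn M P N e) (hconn : Connected M) :
    Connected P := by
  refine ⟨⟨e, hsp.left_mem⟩, fun ⟨A, B, hA, hB, hsum⟩ => ?_⟩
  have ⟨hdj, hPAB⟩ := hsum
  have hE : A.E ∪ B.E = P.E := by rw [hPAB, Matroid.disjointSum_ground_eq]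
  rcases (hE.symm ▸ hsp.left_mem : e ∈ A.E ∪ B.E) with heA | heB
  · exact hsp.not_connected_of_left_split hdj hE heA hB
      (fun C hC => hsum.subset_or_subset hC) hconn
  · exact hsp.not_connected_of_left_split hdj.symm (by rwa [union_comm]) heB hA
      (fun C hC => (hsum.subset_or_subset hC).symm) hconn

lemma connected_right (hsp : IsProperParallelConn M P N e) (hconn : Connected M) :
    Connected N :=
  hsp.symm.connected_left hconn

lemma exists_isCircuit_left_mem (hsp : IsProperParallelConn M P N e) (hconn : Connected M)
    (hP : P.E.Nontrivial) : ∃ C, P.IsCircuit C ∧ e ∈ C := by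
  by_contra! h
  obtain ⟨y, hy, hye⟩ := hP.exists_ne e
  exact hsp.not_connected_of_left_split disjoint_sdiff_right
    (union_sdiff_cancel (singleton_subset_iff.2 hsp.left_mem)) rfl ⟨y, hy, hye⟩
    (fun C hC => .inr (subset_sdiff_singleton hC.subset_ground (h C hC))) hconn

lemma isParallelConn (hsp : IsProperParallelConn M P N e) (hs : Simple M) (hconn : Connected M)
    (hP : P.E.Nontrivial) (hN : N.E.Nontrivial) : IsParallelConn M P N e := by
  have not_isLoop {Q : Matroid α} (hQ : ∀ C, Q.IsCircuit C → M.IsCircuit C) : ¬ IsLoop Q e :=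
    fun h => hs.not_subset_pair (hQ _ (isLoop_iff.1 h)) e e (by simp)
  obtain ⟨C₁, hC₁, he₁⟩ := hsp.exists_isCircuit_left_mem hconn hP
  obtain ⟨C₂, hC₂, he₂⟩ := hsp.symm.exists_isCircuit_left_mem hconn hN
  unfold IsParallelConn
  rw [if_neg (not_isLoop fun _ => hsp.isCircuit_of_left), if_neg (not_isColoop_of_mem hC₁ he₁),
    if_neg (not_isLoop fun _ => hsp.isCircuit_of_right), if_neg (not_isColoop_of_mem hC₂ he₂)]
  exact (isProperParallelConn_iff.1 hsp).1

lemma of_isParallelConn (h : IsParallelConn M P N e) (hint : P.E ∩ N.E = {e})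
    (hconn : Connected M) (hP : P.E.Nontrivial) (hN : N.E.Nontrivial) :
    IsProperParallelConn M P N e := by
  have heP : e ∈ P.E := (hint.ge rfl).1
  have heN : e ∈ N.E := (hint.ge rfl).2
  have hP' : (P.E \ {e}).Nonempty := let ⟨y, hy, hye⟩ := hP.exists_ne e; ⟨y, hy, hye⟩
  have hN' : (N.E \ {e}).Nonempty := let ⟨y, hy, hye⟩ := hN.exists_ne e; ⟨y, hy, hye⟩
  unfold IsParallelConn at h
  split_ifs at h
  · exact absurd ⟨P, con N {e}, ⟨e, heP⟩, hN', h⟩ hconn.2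
  · exact absurd ⟨del P {e}, N, hP', ⟨e, heN⟩, h⟩ hconn.2
  · exact absurd ⟨con P {e}, N, hP', ⟨e, heN⟩, h⟩ hconn.2
  · exact absurd ⟨P, del N {e}, ⟨e, heP⟩, hN', h⟩ hconn.2
  · exact isProperParallelConn_iff.2 ⟨h, hint⟩

lemma not_parallelIrreducible (hsp : IsProperParallelConn M P N e) (hs : Simple M)
    (hconn : Connected M) (hP : P.E.Nontrivial) (hN : N.E.Nontrivial) :
    ¬ ParallelIrreducible M := fun hirr =>
  (hirr e (hsp.left_subset hsp.left_mem)).elim (hN.mono hsp.right_subset).not_subsingleton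
    fun h => h ⟨P, N, hsp.inter_eq, hP, hN, hsp.isParallelConn hs hconn hP hN⟩

lemma restrict (hsp : IsProperParallelConn M P N e) (hs : Simple M) (hZ : Z ⊆ M.E) (heZ : e ∈ Z) :
    IsProperParallelConn (M.restrict Z) (M.restrict (Z ∩ P.E)) (M.restrict (Z ∩ N.E)) e where
  ground_eq := by
    show Z = Z ∩ P.E ∪ Z ∩ N.E
    rw [← inter_union_distrib_left, ← hsp.ground_eq, inter_eq_left.2 hZ]
  inter_eq := by
    rw [Matroid.restrict_ground_eq, Matroid.restrict_ground_eq, ← inter_inter_distrib_left,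
      hsp.inter_eq, inter_eq_right.2 (singleton_subset_iff.2 heZ)]
  isCircuit_iff C := by
    have hP (D : Set α) : (M.restrict (Z ∩ P.E)).IsCircuit D ↔ P.IsCircuit D ∧ D ⊆ Z := by
      rw [Matroid.restrict_isCircuit_iff (inter_subset_left.trans hZ), hsp.isCircuit_left_iff hs,
        subset_inter_iff]
      tauto
    have hN (D : Set α) : (M.restrict (Z ∩ N.E)).IsCircuit D ↔ N.IsCircuit D ∧ D ⊆ Z := by
      rw [Matroid.restrict_isCircuit_iff (inter_subset_left.trans hZ),
        hsp.symm.isCircuit_left_iff hs, subset_inter_iff]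
      tauto
    simp only [Matroid.restrict_isCircuit_iff hZ, hP, hN, hsp.isCircuit_iff C]
    constructor
    · rintro ⟨hP | hN | ⟨C₁, C₂, h₁, h₂, he₁, he₂, rfl⟩, hCZ⟩
      · exact .inl ⟨hP, hCZ⟩
      · exact .inr (.inl ⟨hN, hCZ⟩)
      · have hsub {D : Set α} (hD : D ⊆ C₁ ∪ C₂) : D ⊆ Z := fun y hy =>
          if hye : y = e then hye ▸ heZ else hCZ ⟨hD hy, hye⟩
        exact .inr (.inr ⟨C₁, C₂, ⟨h₁, hsub subset_union_left⟩, ⟨h₂, hsub subset_union_right⟩,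
          he₁, he₂, rfl⟩)
    · rintro (⟨hP, hCZ⟩ | ⟨hN, hCZ⟩ | ⟨C₁, C₂, ⟨h₁, h₁Z⟩, ⟨h₂, h₂Z⟩, he₁, he₂, rfl⟩)
      · exact ⟨.inl hP, hCZ⟩
      · exact ⟨.inr (.inl hN), hCZ⟩
      · exact ⟨.inr (.inr ⟨C₁, C₂, h₁, h₂, he₁, he₂, rfl⟩),
          sdiff_subset.trans (union_subset h₁Z h₂Z)⟩

lemma eq_right_of_subsingleton (hsp : IsProperParallelConn M P N e) (hs : Simple M)
    (hP : P.E.Subsingleton) : M = N := by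
  have hE : M.E = N.E := by
    rw [hsp.ground_eq, union_eq_right.2 ((hP.eq_singleton_of_mem hsp.left_mem).trans_subset
      (singleton_subset_iff.2 hsp.right_mem))]
  rw [hsp.right_eq_restrict hs, ← hE, Matroid.restrict_ground_eq_self]

end IsProperParallelConn

namespace IsProperParallelConn

variable {M P₁ N₁ P₂ N₂ : Matroid α} {e₁ e₂ : α}

lemma left_eq_of_right_ground_eq (hsp₁ : IsProperParallelConn M P₁ N₁ e₁)
    (hsp₂ : IsProperParallelConn M P₂ N₂ e₂) (hs : Simple M) (hconn : Connected M)
    (hP₁ : P₁.E.Nontrivial) (hN : N₁.E = N₂.E) : P₁ = P₂ := by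
  have he : e₁ = e₂ := by
    obtain ⟨C, hC, heC⟩ := hsp₁.exists_isCircuit_left_mem hconn hP₁
    have hCP₂ : C ⊆ insert e₁ P₂.E := hC.subset_ground.trans <| by
      rw [hsp₁.left_ground_eq, hsp₂.left_ground_eq, hN]
      exact insert_subset_insert (subset_insert _ _)
    have he₁ : e₁ ∈ P₂.E ∩ N₂.E :=
      ⟨(hsp₂.isCircuit_left_of_subset_insert hs (hsp₁.isCircuit_of_left hC) hCP₂).subset_ground heC,
        hN ▸ hsp₁.right_mem⟩
    rwa [hsp₂.inter_eq] at he₁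
  rw [hsp₁.left_eq_restrict hs, hsp₂.left_eq_restrict hs, hsp₁.left_ground_eq,
    hsp₂.left_ground_eq, hN, he]

lemma not_right_ssubset (hsp₁ : IsProperParallelConn M P₁ N₁ e₁)
    (hsp₂ : IsProperParallelConn M P₂ N₂ e₂) (hs : Simple M) (hconn : Connected M)
    (hirr₁ : ParallelIrreducible N₁) (hN₂ : N₂.E.Nontrivial) : ¬ N₂.E ⊂ N₁.E := by
  rintro ⟨hsub, hne⟩
  obtain ⟨x, hxN₁, hxN₂⟩ := not_subset.1 hne
  have he₂ : e₂ ∈ N₁.E := hsub hsp₂.right_mem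
  have hsp := hsp₂.restrict hs hsp₁.right_subset he₂
  rw [← hsp₁.right_eq_restrict hs, inter_eq_right.2 hsub] at hsp
  have hxP₂ : x ∈ P₂.E :=
    (hsp₂.ground_eq ▸ hsp₁.right_subset hxN₁ : x ∈ P₂.E ∪ N₂.E).resolve_right hxN₂
  refine hsp.not_parallelIrreducible (hsp₁.simple_right hs) (hsp₁.connected_right hconn) ?_ hN₂
    hirr₁
  exact ⟨e₂, ⟨he₂, hsp₂.left_mem⟩, x, ⟨hxN₁, hxP₂⟩, fun h => hxN₂ (h ▸ hsp₂.right_mem)⟩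

/-- If `N₂` met both sides of `M = P(P₁, N₁)`, restricting to `N₂` would exhibit it as a proper
parallel connection (when `e₁ ∈ N₂`) or as a direct sum (when `e₁ ∉ N₂`). -/
lemma right_subset_right_or_left (hsp₁ : IsProperParallelConn M P₁ N₁ e₁)
    (hsp₂ : IsProperParallelConn M P₂ N₂ e₂) (hs : Simple M) (hconn : Connected M)
    (hirr₂ : ParallelIrreducible N₂) : N₂.E ⊆ N₁.E ∨ N₂.E ⊆ P₁.E := by
  refine or_iff_not_imp_left.2 fun hN₁ => by_contra fun hP₁ => ?_
  obtain ⟨yP, hyPN₂, hyPN₁⟩ := not_subset.1 hN₁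
  obtain ⟨yN, hyNN₂, hyNP₁⟩ := not_subset.1 hP₁
  have hyP : yP ∈ P₁.E :=
    (hsp₁.ground_eq ▸ hsp₂.right_subset hyPN₂ : yP ∈ P₁.E ∪ N₁.E).resolve_right hyPN₁
  have hyN : yN ∈ N₁.E :=
    (hsp₁.ground_eq ▸ hsp₂.right_subset hyNN₂ : yN ∈ P₁.E ∪ N₁.E).resolve_left hyNP₁
  by_cases he₁ : e₁ ∈ N₂.E
  · have hsp := hsp₁.restrict hs hsp₂.right_subset he₁
    rw [← hsp₂.right_eq_restrict hs] at hsp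
    refine hsp.not_parallelIrreducible (hsp₂.simple_right hs) (hsp₂.connected_right hconn) ?_ ?_
      hirr₂
    · exact ⟨e₁, ⟨he₁, hsp₁.left_mem⟩, yP, ⟨hyPN₂, hyP⟩, fun h => hyPN₁ (h ▸ hsp₁.right_mem)⟩
    · exact ⟨e₁, ⟨he₁, hsp₁.right_mem⟩, yN, ⟨hyNN₂, hyN⟩, fun h => hyNP₁ (h ▸ hsp₁.left_mem)⟩
  refine not_connected_of_forall_isCircuit (U := N₂.E ∩ P₁.E) (V := N₂.E ∩ N₁.E)
    ⟨yP, hyPN₂, hyP⟩ ⟨yN, hyNN₂, hyN⟩ ?_ ?_ (fun C hC => ?_) (hsp₂.connected_right hconn)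
  · refine disjoint_left.2 fun y hyP hyN => he₁ ?_
    have hy : y ∈ P₁.E ∩ N₁.E := ⟨hyP.2, hyN.2⟩
    rw [hsp₁.inter_eq, mem_singleton_iff] at hy
    exact hy ▸ hyP.1
  · rw [← inter_union_distrib_left, ← hsp₁.ground_eq, inter_eq_left.2 hsp₂.right_subset]
  · have hCN₂ := hC.subset_ground
    obtain hP | hN | ⟨C₁, C₂, h₁, -, he₁C₁, -, rfl⟩ :=
      (hsp₁.isCircuit_iff C).1 (hsp₂.isCircuit_of_right hC)
    · exact .inl (subset_inter hCN₂ hP.subset_ground)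
    · exact .inr (subset_inter hCN₂ hN.subset_ground)
    · refine absurd ((hsp₂.isCircuit_right_of_subset_insert (x := e₁) hs (hsp₁.isCircuit_of_left h₁)
        fun y hy => ?_).subset_ground he₁C₁) he₁
      by_cases hye : y = e₁
      · exact hye ▸ mem_insert _ _
      · exact mem_insert_of_mem _ (hCN₂ ⟨.inl hy, hye⟩)

lemma right_subset_left_of_ne (hsp₁ : IsProperParallelConn M P₁ N₁ e₁)
    (hsp₂ : IsProperParallelConn M P₂ N₂ e₂) (hs : Simple M) (hconn : Connected M)
    (hirr₁ : ParallelIrreducible N₁) (hirr₂ : ParallelIrreducible N₂) (hN₂ : N₂.E.Nontrivial)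
    (hne : N₁.E ≠ N₂.E) : N₂.E ⊆ P₁.E :=
  (hsp₁.right_subset_right_or_left hsp₂ hs hconn hirr₂).resolve_left fun h =>
    hsp₁.not_right_ssubset hsp₂ hs hconn hirr₁ hN₂ (h.ssubset_of_ne hne.symm)

lemma exchange (hsp₁ : IsProperParallelConn M P₁ N₁ e₁) (hsp₂ : IsProperParallelConn M P₂ N₂ e₂)
    (hs : Simple M) (hN₂P₁ : N₂.E ⊆ P₁.E) (hN₁P₂ : N₁.E ⊆ P₂.E) :
    IsProperParallelConn P₂ (M.restrict (P₁.E ∩ P₂.E)) N₁ e₁ ∧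
      IsProperParallelConn P₁ (M.restrict (P₁.E ∩ P₂.E)) N₂ e₂ := by
  have h₁ := hsp₁.restrict hs hsp₂.left_subset (hN₁P₂ hsp₁.right_mem)
  have h₂ := hsp₂.restrict hs hsp₁.left_subset (hN₂P₁ hsp₂.right_mem)
  rw [inter_comm P₂.E P₁.E, inter_eq_right.2 hN₁P₂, ← hsp₁.right_eq_restrict hs,
    ← hsp₂.left_eq_restrict hs] at h₁
  rw [inter_eq_right.2 hN₂P₁, ← hsp₂.right_eq_restrict hs, ← hsp₁.left_eq_restrict hs] at h₂
  exact ⟨h₁, h₂⟩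

end IsProperParallelConn

namespace IsIterPConn

variable {M P N : Matroid α} {e : α} {l : List (Matroid α)}

lemma isProperParallelConn {P₀ : Matroid α} {l₀ : List (Matroid α)} (h₀ : IsIterPConn P₀ l₀)
    (hint : P₀.E ∩ N.E = {e}) (hpc : IsParallelConn M P₀ N e) (hconn : Connected M)
    (hl : ∀ W ∈ l₀ ++ [N], W.E.Nontrivial) :
    P₀.E.Nontrivial ∧ N.E.Nontrivial ∧ IsProperParallelConn M P₀ N e := by
  have hP₀ := h₀.nontrivial_ground fun W hW => hl W (List.mem_append_left _ hW)
  have hN := hl N List.mem_concat_self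
  exact ⟨hP₀, hN, .of_isParallelConn hpc hint hconn hP₀ hN⟩

lemma eq_singleton (h : IsIterPConn M l) (hs : Simple M) (hconn : Connected M)
    (hirr : ParallelIrreducible M) (hl : ∀ W ∈ l, W.E.Nontrivial) : l = [M] := by
  cases h with
  | base => rfl
  | step P _ N l e hP hint hpc =>
    obtain ⟨hPnt, hNnt, hsp⟩ := hP.isProperParallelConn hint hpc hconn hl
    exact absurd hirr (hsp.not_parallelIrreducible hs hconn hPnt hNnt)

lemma peel (h : IsIterPConn M l) (hs : Simple M) (hconn : Connected M)
    (hl : ∀ W ∈ l, W.E.Nontrivial ∧ ParallelIrreducible W) (hsp : IsProperParallelConn M P N e)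
    (hP : P.E.Nontrivial) (hN : N.E.Nontrivial) (hirr : ParallelIrreducible N) :
    ∃ b, IsIterPConn P b ∧ (b ++ [N]).Perm l := by
  induction h generalizing P N e with
  | base M =>
    exact absurd (hl M (List.mem_singleton_self M)).2 (hsp.not_parallelIrreducible hs hconn hP hN)
  | step P₂ M N₂ c e₂ hc hint hpc ih =>
    obtain ⟨hP₂, hN₂, hsp₂⟩ := hc.isProperParallelConn hint hpc hconn fun W hW => (hl W hW).1
    have hlc : ∀ W ∈ c, W.E.Nontrivial ∧ ParallelIrreducible W :=
      fun W hW => hl W (List.mem_append_left _ hW)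
    have hirr₂ := (hl N₂ List.mem_concat_self).2
    by_cases hNN : N.E = N₂.E
    · have hNN' : N = N₂ := by rw [hsp.right_eq_restrict hs, hsp₂.right_eq_restrict hs, hNN]
      exact ⟨c, hsp.left_eq_of_right_ground_eq hsp₂ hs hconn hP hNN ▸ hc, hNN' ▸ .refl _⟩
    have hN₂P := hsp.right_subset_left_of_ne hsp₂ hs hconn hirr hirr₂ hN₂ hNN
    have hNP₂ := hsp₂.right_subset_left_of_ne hsp hs hconn hirr₂ hirr hN (Ne.symm hNN)
    obtain ⟨hQ₂, hQ⟩ := hsp.exchange hsp₂ hs hN₂P hNP₂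
    by_cases hQnt : (P.E ∩ P₂.E).Nontrivial
    · obtain ⟨b, hb, hperm⟩ :=
        ih (hsp₂.simple_left hs) (hsp₂.connected_left hconn) hlc hQ₂ hQnt hN hirr
      refine ⟨b ++ [N₂], .step _ _ _ _ _ hb hQ.inter_eq
        (hQ.isParallelConn (hsp.simple_left hs) (hsp.connected_left hconn) hQnt hN₂), ?_⟩
      have hswap : (b ++ [N₂] ++ [N]).Perm (b ++ [N] ++ [N₂]) := by
        simpa only [List.append_assoc] using List.perm_append_comm.append_left b
      exact hswap.trans (hperm.append_right _)
    · rw [not_nontrivial_iff] at hQnt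
      have hPN₂ : P = N₂ := hQ.eq_right_of_subsingleton (hsp.simple_left hs) hQnt
      have hP₂N : P₂ = N := hQ₂.eq_right_of_subsingleton (hsp₂.simple_left hs) hQnt
      refine ⟨[N₂], hPN₂ ▸ .base N₂, ?_⟩
      rw [hc.eq_singleton (hsp₂.simple_left hs) (hsp₂.connected_left hconn) (hP₂N ▸ hirr)
        fun W hW => (hlc W hW).1, hP₂N]
      exact List.perm_append_comm

theorem perm (h₁ : IsIterPConn M l) {l' : List (Matroid α)} (h₂ : IsIterPConn M l')
    (hs : Simple M) (hconn : Connected M) (hl : ∀ W ∈ l, W.E.Nontrivial ∧ ParallelIrreducible W)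
    (hl' : ∀ W ∈ l', W.E.Nontrivial ∧ ParallelIrreducible W) : l.Perm l' := by
  induction h₁ generalizing l' with
  | base M =>
    rw [h₂.eq_singleton hs hconn (hl M (List.mem_singleton_self M)).2 fun W hW => (hl' W hW).1]
  | step P M N a e ha hint hpc ih =>
    obtain ⟨hP, hN, hsp⟩ := ha.isProperParallelConn hint hpc hconn fun W hW => (hl W hW).1
    obtain ⟨b, hb, hperm⟩ := h₂.peel hs hconn hl' hsp hP hN (hl N List.mem_concat_self).2
    have hab : a.Perm b := ih hb (hsp.simple_left hs) (hsp.connected_left hconn)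
      (fun W hW => hl W (List.mem_append_left _ hW))
      fun W hW => hl' W (hperm.subset (List.mem_append_left _ hW))
    exact (hab.append_right [N]).trans hperm

end IsIterPConn

theorem stmt9_general (M : Matroid α) (hs : Simple M) (hconn : Connected M)
    (l1 l2 : List (Matroid α))
    (h1 : IsIterPConn M l1) (h2 : IsIterPConn M l2)
    (h1' : ∀ N ∈ l1, N.E.Nontrivial ∧ ParallelIrreducible N)
    (h2' : ∀ N ∈ l2, N.E.Nontrivial ∧ ParallelIrreducible N) :
    l1.Perm l2 :=
  h1.perm h2 hs hconn h1' h2'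

/-- a simple non-trivial connected matroid has a unique (up to permutation)
decomposition as an iterated parallel connection of non-trivial parallel irreducible
matroids. -/
theorem stmt9 (M : Matroid α) (hs : Simple M) (hnt : M.E.Nontrivial) (hconn : Connected M)
    (l1 l2 : List (Matroid α))
    (h1 : IsIterPConn M l1) (h2 : IsIterPConn M l2)
    (h1' : ∀ N ∈ l1, N.E.Nontrivial ∧ ParallelIrreducible N)
    (h2' : ∀ N ∈ l2, N.E.Nontrivial ∧ ParallelIrreducible N) :
    l1.Perm l2 :=
  stmt9_general M hs hconn l1 l2 h1 h2 h1' h2'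

end

end SPPaper
end

section
/- Let M be a loopless connected matroid on ground set E with |E| ≥ 2, and let e ∈ E. Then at least one of M − e and M/e is connected. -/
/-!
Call `X` and `Y` skew in `M` when independent subsets of `X` and of `Y` always have an
independent union; `M` is connected iff no partition of `E` into two nonempty parts is skew.
Suppose `M ＼ e` splits as `X ⊔ Y` and `M ／ e` as `A ⊔ B`. Connectivity of `M` forces
`e ∉ cl X, cl Y` (otherwise `X + e, Y` or `X, Y + e` would be a skew partition of `M`) and
`e ∈ cl A, cl B` (otherwise `A, B + e` or `A + e, B` would be). Now take bases `I` of `X` and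
`I_A, I_B` of `A ∩ Y, B ∩ Y`: skewness in `M ／ e` and then in `M` makes `I ∪ I_A ∪ I_B`
independent, while `e ∈ cl(I ∪ I_A) ∩ cl(I ∪ I_B) = cl I`, contradicting `e ∉ cl X`.
-/

open Polynomial

namespace SPPaper

noncomputable section
open Classical

universe u
variable {α : Type u} {V : Type u}

open Set Matroid

lemma del_eq_delete (M : Matroid α) (X : Set α) : del M X = M ＼ X := rfl

lemma con_eq_contract (M : Matroid α) (X : Set α) : con M X = M ／ X := rfl

lemma _root_.Matroid.contract_insert_indep_iff_of_mem_closure {M : Matroid α} {X I : Set α} {e : α}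
    (he : e ∈ M.closure X) (heI : e ∉ I) : (M ／ insert e X).Indep I ↔ (M ／ X).Indep I := by
  by_cases heX : e ∈ X
  · rw [insert_eq_of_mem heX]
  have hloop : {e} ⊆ (M ／ X).loops := by
    rw [singleton_subset_iff, contract_loops_eq]
    exact ⟨he, heX⟩
  rw [insert_eq, union_comm, ← contract_contract, contract_eq_delete_of_subset_loops hloop,
    deleteElem_indep_iff, and_iff_left heI]

lemma _root_.Matroid.Indep.contractElem_indep_of_notMem_closure {M : Matroid α} {I : Set α} {e : α}
    (hI : M.Indep I) (he : e ∈ M.E) (heI : e ∉ M.closure I) : (M ／ {e}).Indep I := by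
  have heI' : e ∉ I := fun h => heI (M.mem_closure_of_mem' h)
  have hins : M.Indep (insert e I) := (hI.insert_indep_iff_of_notMem heI').2 ⟨he, heI⟩
  simpa [heI'] using hins.diff_indep_contract_of_subset (singleton_subset_iff.2 (mem_insert e I))

/-- For disjoint `X, Y ⊆ M.E` this is `r(X) + r(Y) = r(X ∪ Y)`, phrased without ranks so that it
also makes sense for infinite matroids. -/
def Skew (M : Matroid α) (X Y : Set α) : Prop :=
  ∀ ⦃I J⦄, M.Indep I → M.Indep J → I ⊆ X → J ⊆ Y → M.Indep (I ∪ J)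

lemma skew_iff_forall_indep_contract {M : Matroid α} {X Y : Set α} (hXY : Disjoint X Y) :
    Skew M X Y ↔ ∀ ⦃I⦄, I ⊆ X → M.Indep I → (M ／ Y).Indep I := by
  obtain ⟨J, hJ⟩ := M.exists_isBasis' Y
  refine ⟨fun h I hIX hI => ?_, fun h I J' hI hJ' hIX hJ'Y => ?_⟩
  · exact hJ.contract_indep_iff.2 ⟨h hI hJ.indep hIX hJ.subset, hXY.symm.mono_right hIX⟩
  · obtain ⟨K, hK, hJ'K⟩ := hJ'.subset_isBasis'_of_subset hJ'Y
    exact (hK.contract_indep_iff.1 (h hIX hI)).1.subset (union_subset_union_right _ hJ'K)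

namespace Skew

variable {M : Matroid α} {X Y : Set α} {e : α}

lemma symm (h : Skew M X Y) : Skew M Y X := fun _ _ hI hJ hIY hJX =>
  union_comm _ _ ▸ h hJ hI hJX hIY

lemma of_delete {D : Set α} (h : Skew (M ＼ D) X Y) (hX : Disjoint X D) (hY : Disjoint Y D) :
    Skew M X Y := fun _ _ hI hJ hIX hJY =>
  (h (hI.indep_delete_of_disjoint (hX.mono_left hIX))
    (hJ.indep_delete_of_disjoint (hY.mono_left hJY)) hIX hJY).of_delete

lemma insert_of_mem_closure (h : Skew M X Y) (hXY : Disjoint X Y) (he : e ∈ M.closure X)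
    (heY : e ∉ Y) : Skew M (insert e X) Y := by
  refine ((skew_iff_forall_indep_contract (disjoint_insert_right.2 ⟨heY, hXY.symm⟩)).2
    fun I hIY hI => ?_).symm
  rw [contract_insert_indep_iff_of_mem_closure he fun heI => heY (hIY heI)]
  exact (skew_iff_forall_indep_contract hXY.symm).1 h.symm hIY hI

lemma insert_of_contractElem (h : Skew (M ／ {e}) X Y) (hXY : Disjoint X Y) (he : e ∈ M.E)
    (heX : e ∉ M.closure X) : Skew M X (insert e Y) := by
  have heX' : e ∉ X := fun h => heX (M.mem_closure_of_mem' h)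
  refine (skew_iff_forall_indep_contract (disjoint_insert_right.2 ⟨heX', hXY⟩)).2
    fun I hIX hI => ?_
  rw [insert_eq, ← contract_contract]
  exact (skew_iff_forall_indep_contract hXY).1 h hIX
    (hI.contractElem_indep_of_notMem_closure he fun heI => heX (M.closure_subset_closure hIX heI))

lemma isDirSumOf_restrict (h : Skew M X Y) (hXY : Disjoint X Y) (hE : X ∪ Y = M.E) :
    IsDirSumOf M (M ↾ X) (M ↾ Y) := by
  refine ⟨by simpa only [restrict_ground_eq] using hXY, ext_indep (by simp [hE]) fun I hIE => ?_⟩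
  simp only [disjointSum_indep_iff, restrict_indep_iff, restrict_ground_eq, hE]
  refine ⟨fun hI => ⟨⟨hI.subset inter_subset_left, inter_subset_right⟩,
    ⟨hI.subset inter_subset_left, inter_subset_right⟩, hIE⟩, fun ⟨⟨hIX, _⟩, ⟨hIY, _⟩, _⟩ => ?_⟩
  rw [← inter_eq_self_of_subset_left hIE, ← hE, inter_union_distrib_left]
  exact h hIX hIY inter_subset_right inter_subset_right

end Skew

lemma IsDirSumOf.skew {N M₁ M₂ : Matroid α} (hN : IsDirSumOf N M₁ M₂) : Skew N M₁.E M₂.E := by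
  obtain ⟨h, rfl⟩ := hN
  intro I J hI hJ hI₁ hJ₂
  rw [disjointSum_indep_iff] at hI hJ ⊢
  rw [inter_eq_self_of_subset_left hI₁] at hI
  rw [inter_eq_self_of_subset_left hJ₂] at hJ
  rw [union_inter_distrib_right, union_inter_distrib_right, inter_eq_self_of_subset_left hI₁,
    inter_eq_self_of_subset_left hJ₂, (h.symm.mono_left hJ₂).inter_eq,
    (h.mono_left hI₁).inter_eq, union_empty, empty_union]
  exact ⟨hI.1, hJ.2.1, union_subset_union hI₁ hJ₂⟩

lemma connected_iff_not_skew (M : Matroid α) : Connected M ↔ M.E.Nonempty ∧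
    ¬ ∃ X Y, X.Nonempty ∧ Y.Nonempty ∧ Disjoint X Y ∧ X ∪ Y = M.E ∧ Skew M X Y := by
  refine and_congr_right fun _ => not_congr ⟨?_, ?_⟩
  · rintro ⟨M₁, M₂, h₁, h₂, hN⟩
    obtain ⟨hdj, rfl⟩ := id hN
    exact ⟨M₁.E, M₂.E, h₁, h₂, hdj, disjointSum_ground_eq.symm, hN.skew⟩
  · rintro ⟨X, Y, hX, hY, hXY, hE, h⟩
    exact ⟨M ↾ X, M ↾ Y, hX, hY, h.isDirSumOf_restrict hXY hE⟩

lemma exists_skew_of_not_connected {M : Matroid α} (hM : ¬ Connected M) (hE : M.E.Nonempty) :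
    ∃ X Y, X.Nonempty ∧ Y.Nonempty ∧ Disjoint X Y ∧ X ∪ Y = M.E ∧ Skew M X Y := by
  by_contra h
  exact hM ((connected_iff_not_skew M).2 ⟨hE, h⟩)

namespace Connected

variable {M : Matroid α} {X Y : Set α} {e : α}

lemma not_skew (hM : Connected M) (hX : X.Nonempty)
    (hY : Y.Nonempty) (hXY : Disjoint X Y) (hE : X ∪ Y = M.E) : ¬ Skew M X Y := fun h =>
  ((connected_iff_not_skew M).1 hM).2 ⟨X, Y, hX, hY, hXY, hE, h⟩

lemma notMem_closure_of_skew_delete (hM : Connected M) (h : Skew M X Y) (hXY : Disjoint X Y)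
    (hE : X ∪ Y = M.E \ {e}) (hY : Y.Nonempty) : e ∉ M.closure X := by
  intro he
  have heY : e ∉ Y := fun heY => (hE.subset (subset_union_right heY)).2 rfl
  refine hM.not_skew (insert_nonempty e X) hY (disjoint_insert_left.2 ⟨heY, hXY⟩) ?_
    (h.insert_of_mem_closure hXY he heY)
  rw [insert_union, hE, insert_sdiff_singleton, insert_eq_of_mem (mem_ground_of_mem_closure he)]

lemma mem_closure_of_skew_contractElem (hM : Connected M) (h : Skew (M ／ {e}) X Y)
    (hXY : Disjoint X Y) (hE : X ∪ Y = M.E \ {e}) (he : e ∈ M.E) (hX : X.Nonempty) :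
    e ∈ M.closure X := by
  by_contra heX
  have heX' : e ∉ X := fun h => heX (M.mem_closure_of_mem' h)
  refine hM.not_skew hX (insert_nonempty e Y) (disjoint_insert_right.2 ⟨heX', hXY⟩) ?_
    (h.insert_of_contractElem hXY he heX)
  rw [union_insert, hE, insert_sdiff_singleton, insert_eq_of_mem he]

end Connected

lemma mem_closure_of_skew_of_skew_contractElem {M : Matroid α} {X Y A B : Set α} {e : α}
    (hXY : Skew M X Y) (hAB : Skew (M ／ {e}) A B) (hdj : Disjoint A B) (hE : A ∪ B = X ∪ Y)
    (heY : e ∉ M.closure Y) (heA : e ∈ M.closure A) (heB : e ∈ M.closure B) :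
    e ∈ M.closure X := by
  obtain ⟨I, hI⟩ := M.exists_isBasis' X
  obtain ⟨IA, hIA⟩ := M.exists_isBasis' (A ∩ Y)
  obtain ⟨IB, hIB⟩ := M.exists_isBasis' (B ∩ Y)
  have hcontract_indep : ∀ {K C}, M.IsBasis' K (C ∩ Y) → (M ／ {e}).Indep K := fun hK =>
    hK.indep.contractElem_indep_of_notMem_closure (mem_ground_of_mem_closure heA) fun heK =>
      heY (M.closure_subset_closure (hK.subset.trans inter_subset_right) heK)
  have hind : M.Indep ((I ∪ IA) ∪ (I ∪ IB)) := by
    rw [← union_union_distrib_left]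
    refine hXY hI.indep ?_ hI.subset (union_subset (hIA.subset.trans inter_subset_right)
      (hIB.subset.trans inter_subset_right))
    exact (hAB (hcontract_indep hIA) (hcontract_indep hIB) (hIA.subset.trans inter_subset_left)
      (hIB.subset.trans inter_subset_left)).of_contract
  have hspan : ∀ {K C}, M.IsBasis' K (C ∩ Y) → C ⊆ X ∪ Y → M.closure C ⊆ M.closure (I ∪ K) :=
    fun hK hC => by
      rw [closure_union_congr_left hI.closure_eq_closure,
        closure_union_congr_right hK.closure_eq_closure]
      refine M.closure_subset_closure fun x hx => ?_
      rcases hC hx with hxX | hxY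
      exacts [Or.inl hxX, Or.inr ⟨hx, hxY⟩]
  have hinter : (I ∪ IA) ∩ (I ∪ IB) = I := by
    rw [← union_inter_distrib_left, (hdj.mono (hIA.subset.trans inter_subset_left)
      (hIB.subset.trans inter_subset_left)).inter_eq, union_empty]
  rw [← hI.closure_eq_closure, ← hinter, hind.closure_inter_eq_inter_closure]
  exact ⟨hspan hIA (hE ▸ subset_union_left) heA, hspan hIB (hE ▸ subset_union_right) heB⟩

theorem stmt12_general (M : Matroid α) (hconn : Connected M)
    (hnt : M.E.Nontrivial) (e : α) (he : e ∈ M.E) :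
    Connected (del M {e}) ∨ Connected (con M {e}) := by
  rw [del_eq_delete, con_eq_contract]
  by_contra! h
  have hne : (M.E \ {e}).Nonempty := hnt.exists_ne e
  obtain ⟨X, Y, hX, hY, hXY, hE, hskew⟩ := exists_skew_of_not_connected h.1 hne
  obtain ⟨A, B, hA, hB, hAB, hE', hskew'⟩ := exists_skew_of_not_connected h.2 hne
  rw [delete_ground] at hE
  rw [contract_ground] at hE'
  replace hskew : Skew M X Y := hskew.of_delete (subset_sdiff.1 (hE ▸ subset_union_left)).2
    (subset_sdiff.1 (hE ▸ subset_union_right)).2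
  have heX := hconn.notMem_closure_of_skew_delete hskew hXY hE hY
  have heY := hconn.notMem_closure_of_skew_delete hskew.symm hXY.symm (union_comm X Y ▸ hE) hX
  have heA := hconn.mem_closure_of_skew_contractElem hskew' hAB hE' he hA
  have heB :=
    hconn.mem_closure_of_skew_contractElem hskew'.symm hAB.symm (union_comm A B ▸ hE') he hB
  exact heX (mem_closure_of_skew_of_skew_contractElem hskew hskew' hAB (hE'.trans hE.symm) heY
    heA heB)

/-- for a loopless connected matroid with at least two elements, for each
element `e`, either `M − e` or `M/e` is connected. -/
theorem stmt12 (M : Matroid α) (hl : Loopless M) (hconn : Connected M)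
    (hnt : M.E.Nontrivial) (e : α) (he : e ∈ M.E) :
    Connected (del M {e}) ∨ Connected (con M {e}) :=
  stmt12_general M hconn hnt e he

end

end SPPaper
end
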